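/- arXiv:0910.0533 — 4 statements merged into one kernel-verified Lean document; each statement's English description precedes it below -/
import Mathlib

section
/- If D is a non-trivial Steiner t-design with parameters t, k, v, then v ≥ (t+1)(k-t+1). -/
/-!
Take a block `b₀`, a point `x ∉ b₀` and a `t`-set `T ⊆ b₀`. The `(t+1)`-set `S = T ∪ {x}` lies in
no block, so for each `s ∈ S` the block `b_s` through `S \ {s}` misses `s` and has exactly `k - t`
points outside `S`. For `s ≠ s'` the blocks `b_s` and `b_{s'}` share no point `y ∉ S`: otherwise
they would both contain the `t`-set `(S \ {s, s'}) ∪ {y}`. Hence `S` together with the `t + 1`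
disjoint sets `b_s \ S` gives `(t + 1) + (t + 1)(k - t)` distinct points.
-/

open Finset

section

variable {X : Type*}

def IsSteinerSystem (B : Finset (Finset X)) (t : ℕ) : Prop :=
  ∀ T : Finset X, #T = t → ∃! b, b ∈ B ∧ T ⊆ b

theorem isSteinerSystem_of_card_filter_eq_one [DecidableEq X] {B : Finset (Finset X)} {t : ℕ}
    (h : ∀ T : Finset X, #T = t → #(B.filter (fun b => T ⊆ b)) = 1) : IsSteinerSystem B t := by
  intro T hT
  simpa only [mem_filter] using card_eq_one_iff_existsUnique.mp (h T hT)

theorem card_mul_succ_le_card_univ [Fintype X] [DecidableEq X] (S : Finset X) (f : X → Finset X)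
    (m : ℕ) (hcard : ∀ s ∈ S, #(f s) = m) (hdisjS : ∀ s ∈ S, Disjoint S (f s))
    (hdisj : (S : Set X).PairwiseDisjoint f) :
    #S * (m + 1) ≤ Fintype.card X := by
  have hunion : #(S ∪ S.biUnion f) = #S * (m + 1) := by
    rw [card_union_of_disjoint (disjoint_biUnion_right _ _ _ |>.mpr hdisjS),
      card_biUnion hdisj, sum_congr rfl hcard, sum_const, smul_eq_mul]
    ring
  exact hunion ▸ card_le_univ _

namespace IsSteinerSystem

variable {B : Finset (Finset X)} {t : ℕ}

theorem eq_of_subset (hB : IsSteinerSystem B t) {T b₁ b₂ : Finset X} (hT : #T = t)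
    (hb₁ : b₁ ∈ B) (hb₂ : b₂ ∈ B) (h₁ : T ⊆ b₁) (h₂ : T ⊆ b₂) : b₁ = b₂ :=
  (hB T hT).unique ⟨hb₁, h₁⟩ ⟨hb₂, h₂⟩

theorem insert_not_subset [DecidableEq X] (hB : IsSteinerSystem B t) {b₀ T : Finset X} {x : X}
    (hb₀ : b₀ ∈ B) (hTb₀ : T ⊆ b₀) (hT : #T = t) (hx : x ∉ b₀) :
    ∀ b ∈ B, ¬ insert x T ⊆ b := by
  intro b hb hsub
  obtain rfl : b = b₀ := hB.eq_of_subset hT hb hb₀ ((subset_insert x T).trans hsub) hTb₀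
  exact hx (hsub (mem_insert_self x T))

theorem notMem_of_erase_subset [DecidableEq X] {S b : Finset X} {s : X} (hS : ∀ b ∈ B, ¬ S ⊆ b)
    (hb : b ∈ B) (hsub : S.erase s ⊆ b) : s ∉ b := fun hs =>
  hS b hb fun y hy => by
    rcases eq_or_ne y s with rfl | hne
    · exact hs
    · exact hsub (mem_erase.mpr ⟨hne, hy⟩)

theorem card_sdiff_of_erase_subset [DecidableEq X] {S b : Finset X} {s : X} {k : ℕ}
    (hS : ∀ b ∈ B, ¬ S ⊆ b) (hScard : #S = t + 1) (hs : s ∈ S) (hb : b ∈ B) (hbcard : #b = k)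
    (hsub : S.erase s ⊆ b) : #(b \ S) = k - t := by
  have hinter : S ∩ b = S.erase s := by
    ext y
    rcases eq_or_ne y s with rfl | hne
    · simp [notMem_of_erase_subset hS hb hsub]
    · simpa [hne] using fun hy => hsub (mem_erase.mpr ⟨hne, hy⟩)
  rw [card_sdiff, hinter, card_erase_of_mem hs, hScard, hbcard, Nat.add_sub_cancel]

theorem disjoint_sdiff_of_erase_subset [DecidableEq X] (hB : IsSteinerSystem B t)
    {S b₁ b₂ : Finset X} {s₁ s₂ : X} (hS : ∀ b ∈ B, ¬ S ⊆ b) (hScard : #S = t + 1)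
    (hs₁ : s₁ ∈ S) (hs₂ : s₂ ∈ S) (hne : s₁ ≠ s₂) (hb₁ : b₁ ∈ B) (hb₂ : b₂ ∈ B)
    (h₁ : S.erase s₁ ⊆ b₁) (h₂ : S.erase s₂ ⊆ b₂) : Disjoint (b₁ \ S) (b₂ \ S) := by
  refine disjoint_left.mpr fun y hy₁ hy₂ => ?_
  rw [mem_sdiff] at hy₁ hy₂
  have hs₂₁ : s₂ ∈ S.erase s₁ := mem_erase.mpr ⟨hne.symm, hs₂⟩
  have hU : #(insert y ((S.erase s₁).erase s₂)) = t := by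
    have hy : y ∉ (S.erase s₁).erase s₂ := fun h => hy₁.2 (mem_of_mem_erase (mem_of_mem_erase h))
    have hpos : 0 < #(S.erase s₁) := card_pos.mpr ⟨s₂, hs₂₁⟩
    rw [card_erase_of_mem hs₁, hScard] at hpos
    rw [card_insert_of_notMem hy, card_erase_of_mem hs₂₁, card_erase_of_mem hs₁, hScard]
    omega
  have hUb₁ : insert y ((S.erase s₁).erase s₂) ⊆ b₁ :=
    insert_subset hy₁.1 ((erase_subset _ _).trans h₁)
  have hUb₂ : insert y ((S.erase s₁).erase s₂) ⊆ b₂ :=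
    insert_subset hy₂.1 (erase_right_comm (s := S) ▸ (erase_subset _ _).trans h₂)
  obtain rfl := hB.eq_of_subset hU hb₁ hb₂ hUb₁ hUb₂
  exact notMem_of_erase_subset hS hb₂ h₂ (h₁ hs₂₁)

theorem succ_mul_le_card [Fintype X] [DecidableEq X] (hB : IsSteinerSystem B t) {k : ℕ}
    (hblocks : ∀ b ∈ B, #b = k) {S : Finset X} (hS : ∀ b ∈ B, ¬ S ⊆ b) (hScard : #S = t + 1) :
    (t + 1) * (k - t + 1) ≤ Fintype.card X := by
  have hblock : ∀ s ∈ S, ∃ b, b ∈ B ∧ S.erase s ⊆ b := fun s hs =>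
    (hB _ (by rw [card_erase_of_mem hs, hScard, Nat.add_sub_cancel])).exists
  choose! f hfB hf using hblock
  rw [← hScard]
  refine card_mul_succ_le_card_univ S (fun s => f s \ S) (k - t)
    (fun s hs =>
      card_sdiff_of_erase_subset hS hScard hs (hfB s hs) (hblocks _ (hfB s hs)) (hf s hs))
    (fun s _ => disjoint_sdiff_self_right) ?_
  intro s₁ hs₁ s₂ hs₂ hne
  exact hB.disjoint_sdiff_of_erase_subset hS hScard hs₁ hs₂ hne (hfB s₁ hs₁) (hfB s₂ hs₂)
    (hf s₁ hs₁) (hf s₂ hs₂)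

end IsSteinerSystem

end

theorem stmt_5_general {X : Type*} [Fintype X] [DecidableEq X]
    (v k t : ℕ) (htk : t < k) (hkv : k < v)
    (B : Finset (Finset X))
    (hX : Fintype.card X = v)
    (hblocks : ∀ b ∈ B, b.card = k)
    (hdesign : ∀ T : Finset X, T.card = t → (B.filter (fun b => T ⊆ b)).card = 1) :
    v ≥ (t + 1) * (k - t + 1) := by
  have hB := isSteinerSystem_of_card_filter_eq_one hdesign
  obtain ⟨T₀, -, hT₀⟩ := exists_subset_card_eq (s := (univ : Finset X)) (n := t)
    (by rw [card_univ, hX]; omega)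
  obtain ⟨b₀, ⟨hb₀, -⟩, -⟩ := hB T₀ hT₀
  obtain ⟨x, -, hx⟩ := exists_mem_notMem_of_card_lt_card (s := b₀) (t := univ)
    (by rw [hblocks b₀ hb₀, card_univ, hX]; exact hkv)
  obtain ⟨T, hTb₀, hT⟩ := exists_subset_card_eq (s := b₀) (n := t)
    (by rw [hblocks b₀ hb₀]; exact htk.le)
  have hxT : x ∉ T := fun h => hx (hTb₀ h)
  rw [← hX]
  exact hB.succ_mul_le_card hblocks (hB.insert_not_subset hb₀ hTb₀ hT hx)
    (by rw [card_insert_of_notMem hxT, hT])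

/-- (Tits) If `D` is a non-trivial Steiner `t`-design with parameters
`t, k, v`, then `v ≥ (t+1)(k-t+1)`. -/
theorem stmt_5 {X : Type*} [Fintype X] [DecidableEq X]
    (v k t : ℕ) (ht : 0 < t) (htk : t < k) (hkv : k < v)
    (B : Finset (Finset X))
    (hX : Fintype.card X = v)
    (hblocks : ∀ b ∈ B, b.card = k)
    (hdesign : ∀ T : Finset X, T.card = t → (B.filter (fun b => T ⊆ b)).card = 1) :
    v ≥ (t + 1) * (k - t + 1) :=
  stmt_5_general v k t htk hkv B hX hblocks hdesign
end

section
/- If D is a non-trivial Steiner t-design with parameters t, k, v and t > 2, then v - t + 1 ≥ (k-t+2)(k-t+1). Moreover, if equality holds, then (t,k,v) is one of (3,4,8), (3,6,22), (3,12,112), (4,7,23), or (5,8,24). -/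
/-!
Let `λ(A)` be the number of blocks through a point set `A`. Fix a block `b`, a point `z ∉ b` and a
`(t-2)`-subset `S ⊆ b`. Each point `w ∈ b \ S` lies in a block through `S ∪ {z, w}`, and these
blocks are pairwise distinct: a block containing two of the `w` contains a `t`-subset of `b`, so
it is `b`, which misses `z`. Hence `λ(S ∪ {z}) ≥ k - t + 2`, and double counting gives
`λ(S ∪ {z}) * (k - t + 1) = v - t + 1`, whence the bound.

In the equality case put `a = k - t`, so `v - t + 1 = (a + 1)(a + 2)`. The same double counting
makes `C(a + j, j)` divide `C(v - t + j, j)` for `j ≤ t`. For `j = 3` this forces `a + 3 ∣ 12`,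
i.e. `a ∈ {1, 3, 9}`, and `j = 4, 6` leave only the five listed parameter sets.
-/

open Finset

section Designs

variable {X : Type*} [DecidableEq X]

def IsTWiseBalanced (B : Finset (Finset X)) (t lam : ℕ) : Prop :=
  ∀ T : Finset X, #T = t → #{b ∈ B | T ⊆ b} = lam

variable {B : Finset (Finset X)} {t : ℕ}

lemma IsTWiseBalanced.card_blocks_mul_choose [Fintype X] {lam k : ℕ}
    (hB : IsTWiseBalanced B t lam) (hk : ∀ b ∈ B, #b = k) {A : Finset X} (hAt : #A ≤ t) :
    #{b ∈ B | A ⊆ b} * (k - #A).choose (t - #A) =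
      lam * (Fintype.card X - #A).choose (t - #A) := by
  calc #{b ∈ B | A ⊆ b} * (k - #A).choose (t - #A)
      = #((univ \ A).powersetCard (t - #A)) * lam :=
        card_mul_eq_card_mul (fun b U => U ⊆ b) (fun b hb => ?_) (fun U hU => ?_)
    _ = lam * (Fintype.card X - #A).choose (t - #A) := by
        rw [card_powersetCard, card_sdiff_of_subset (subset_univ A), card_univ, mul_comm]
  · rw [mem_filter] at hb
    have : bipartiteAbove (fun b U => U ⊆ b) ((univ \ A).powersetCard (t - #A)) b =
        (b \ A).powersetCard (t - #A) := by
      ext U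
      simp only [bipartiteAbove, mem_filter, mem_powersetCard, subset_sdiff, subset_univ, true_and]
      tauto
    rw [this, card_powersetCard, card_sdiff_of_subset hb.2, hk b hb.1]
  · rw [mem_powersetCard, subset_sdiff] at hU
    have : bipartiteBelow (fun b U => U ⊆ b) {b ∈ B | A ⊆ b} U = {b ∈ B | A ∪ U ⊆ b} := by
      ext b
      simp only [bipartiteBelow, mem_filter, union_subset_iff, and_assoc]
    rw [this, hB _ (by rw [card_union_of_disjoint hU.1.2.symm, hU.2]; omega)]

lemma IsTWiseBalanced.existsUnique_block (hB : IsTWiseBalanced B t 1) {T : Finset X}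
    (hT : #T = t) : ∃! b, b ∈ B ∧ T ⊆ b := by
  simpa using card_eq_one_iff_existsUnique.mp (hB T hT)

lemma IsTWiseBalanced.card_sdiff_le_card_blocks_insert (hB : IsTWiseBalanced B t 1)
    {b S : Finset X} {z : X} (hb : b ∈ B) (hz : z ∉ b) (hSb : S ⊆ b) (hS : #S + 2 = t) :
    #(b \ S) ≤ #{c ∈ B | insert z S ⊆ c} := by
  have hzS : z ∉ S := fun h => hz (hSb h)
  refine card_le_card_of_forall_subsingleton (fun w c => w ∈ c) (fun w hw => ?_) ?_
  · rw [mem_sdiff] at hw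
    have hwz : w ∉ insert z S := by
      rw [mem_insert, not_or]
      exact ⟨fun h => hz (h ▸ hw.1), hw.2⟩
    have hT : #(insert w (insert z S)) = t := by
      rw [card_insert_of_notMem hwz, card_insert_of_notMem hzS]; omega
    obtain ⟨c, ⟨hcB, hc⟩, -⟩ := hB.existsUnique_block hT
    exact ⟨c, mem_filter.mpr ⟨hcB, (subset_insert _ _).trans hc⟩, hc (mem_insert_self _ _)⟩
  · intro c hc w ⟨hw, hwc⟩ w' ⟨hw', hw'c⟩
    by_contra hne
    rw [mem_sdiff] at hw hw'
    rw [mem_filter, insert_subset_iff] at hc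
    have hT : #(insert w (insert w' S)) = t := by
      rw [card_insert_of_notMem (by simp [hne, hw.2]), card_insert_of_notMem hw'.2]; omega
    have hbc : b = c := (hB.existsUnique_block hT).unique
      ⟨hb, insert_subset hw.1 (insert_subset hw'.1 hSb)⟩
      ⟨hc.1, insert_subset hwc (insert_subset hw'c hc.2.2)⟩
    exact hz (hbc ▸ hc.2.1)

variable [Fintype X] {k : ℕ}

lemma IsTWiseBalanced.choose_dvd_choose (hB : IsTWiseBalanced B t 1) (hk : ∀ b ∈ B, #b = k)
    (htk : t ≤ k) (htX : t ≤ Fintype.card X) {j : ℕ} (hj : j ≤ t) :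
    (k - t + j).choose j ∣ (Fintype.card X - t + j).choose j := by
  obtain ⟨A, -, hA⟩ := exists_subset_card_eq (s := (univ : Finset X)) (n := t - j) (by simp; omega)
  have hcount := hB.card_blocks_mul_choose hk (hA ▸ Nat.sub_le t j)
  rw [hA, show t - (t - j) = j by omega, show k - (t - j) = k - t + j by omega,
    show Fintype.card X - (t - j) = Fintype.card X - t + j by omega, one_mul] at hcount
  exact Dvd.intro_left _ hcount

lemma IsTWiseBalanced.mul_le_card_sub_add_one (hB : IsTWiseBalanced B t 1)
    (hk : ∀ b ∈ B, #b = k) (ht : 2 ≤ t) (htk : t ≤ k) (hkX : k < Fintype.card X) :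
    (k - t + 2) * (k - t + 1) ≤ Fintype.card X - t + 1 := by
  obtain ⟨T, -, hT⟩ := exists_subset_card_eq (s := (univ : Finset X)) (n := t) (by simp; omega)
  obtain ⟨b, ⟨hb, -⟩, -⟩ := hB.existsUnique_block hT
  obtain ⟨z, -, hz⟩ := exists_mem_notMem_of_card_lt_card (s := b) (t := (univ : Finset X))
    (by rw [hk b hb, card_univ]; exact hkX)
  obtain ⟨S, hSb, hS⟩ := exists_subset_card_eq (s := b) (n := t - 2) (by rw [hk b hb]; omega)
  have hA : #(insert z S) = t - 1 := by
    rw [card_insert_of_notMem (fun h => hz (hSb h)), hS]; omega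
  have hcount := hB.card_blocks_mul_choose hk (A := insert z S) (by omega)
  rw [hA, show t - (t - 1) = 1 by omega, Nat.choose_one_right, Nat.choose_one_right,
    one_mul] at hcount
  calc (k - t + 2) * (k - t + 1) = #(b \ S) * (k - (t - 1)) := by
        rw [card_sdiff_of_subset hSb, hk b hb, hS]; congr 1 <;> omega
    _ ≤ #{c ∈ B | insert z S ⊆ c} * (k - (t - 1)) :=
        Nat.mul_le_mul_right _ (hB.card_sdiff_le_card_blocks_insert hb hz hSb (by omega))
    _ = Fintype.card X - t + 1 := by omega

end Designs

lemma add_three_dvd_twelve {a N : ℕ} (hN : N + 1 = (a + 2) * (a + 1))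
    (h : (a + 3).choose 3 ∣ (N + 3).choose 3) : a + 3 ∣ 12 := by
  have hdesc : (a + 2) * (a + 1) * (a + 3) ∣ (a + 2) * (a + 1) * ((N + 3) * (N + 2)) := by
    have := mul_dvd_mul_left (Nat.factorial 3) h
    rw [← Nat.descFactorial_eq_factorial_mul_choose, ← Nat.descFactorial_eq_factorial_mul_choose]
      at this
    simp only [Nat.descFactorial_succ, Nat.descFactorial_zero, Nat.reduceSubDiff, Nat.sub_zero,
      mul_one, hN] at this
    simpa only [mul_comm, mul_assoc, mul_left_comm] using this
  -- `N + 1 = (a + 1)(a + 2) ≡ 2 (mod a + 3)`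
  have hexp : (N + 3) * (N + 2) = (a + 3) * (a * (a ^ 2 + 3 * a + 7)) + 12 := by
    rw [show (N + 3) * (N + 2) = (N + 1 + 2) * (N + 1 + 1) by ring, hN]; ring
  rw [← (Nat.dvd_add_right (dvd_mul_right _ _)), ← hexp]
  exact Nat.dvd_of_mul_dvd_mul_left (by positivity) hdesc

lemma steiner_params_of_eq {t k v : ℕ} (ht : 2 < t) (htk : t < k)
    (hdvd : ∀ j ≤ t, (k - t + j).choose j ∣ (v - t + j).choose j)
    (heq : v - t + 1 = (k - t + 2) * (k - t + 1)) :
    (t, k, v) = (3, 4, 8) ∨ (t, k, v) = (3, 6, 22) ∨ (t, k, v) = (3, 12, 112) ∨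
      (t, k, v) = (4, 7, 23) ∨ (t, k, v) = (5, 8, 24) := by
  obtain ⟨N, rfl⟩ : ∃ N, v = t + N := ⟨v - t, by
    have := Nat.le_mul_of_pos_right (k - t + 2) (by omega : 0 < k - t + 1); omega⟩
  obtain ⟨a, rfl⟩ : ∃ a, k = t + a := ⟨k - t, by omega⟩
  simp only [Nat.add_sub_cancel_left] at hdvd heq
  have ha : a = 1 ∨ a = 3 ∨ a = 9 := by
    have h12 := add_three_dvd_twelve heq (hdvd 3 ht)
    have : a ≤ 9 := by have := Nat.le_of_dvd (by norm_num) h12; omega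
    interval_cases a <;> omega
  rcases ha with rfl | rfl | rfl
  · obtain rfl : N = 5 := by omega
    obtain rfl : t = 3 := by
      by_contra h; exact absurd (hdvd 4 (by omega)) (by decide)
    simp
  · obtain rfl : N = 19 := by omega
    have : t < 6 := by
      by_contra h; exact absurd (hdvd 6 (by omega)) (by decide)
    interval_cases t <;> simp
  · obtain rfl : N = 109 := by omega
    obtain rfl : t = 3 := by
      by_contra h; exact absurd (hdvd 4 (by omega)) (by decide)
    simp

/-- (Cameron) If `D` is a non-trivial Steiner `t`-design with `t > 2`, then
`v - t + 1 ≥ (k-t+2)(k-t+1)`, and in case of equality `(t,k,v)` is one of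
`(3,4,8), (3,6,22), (3,12,112), (4,7,23), (5,8,24)`. -/
theorem stmt_6 {X : Type*} [Fintype X] [DecidableEq X]
    (v k t : ℕ) (ht : 2 < t) (htk : t < k) (hkv : k < v)
    (B : Finset (Finset X))
    (hX : Fintype.card X = v)
    (hblocks : ∀ b ∈ B, b.card = k)
    (hdesign : ∀ T : Finset X, T.card = t → (B.filter (fun b => T ⊆ b)).card = 1) :
    v - t + 1 ≥ (k - t + 2) * (k - t + 1) ∧
      (v - t + 1 = (k - t + 2) * (k - t + 1) →
        ((t, k, v) = (3, 4, 8) ∨ (t, k, v) = (3, 6, 22) ∨ (t, k, v) = (3, 12, 112) ∨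
          (t, k, v) = (4, 7, 23) ∨ (t, k, v) = (5, 8, 24))) := by
  subst hX
  have hB : IsTWiseBalanced B t 1 := hdesign
  refine ⟨hB.mul_le_card_sub_add_one hblocks ht.le htk.le hkv, fun heq => ?_⟩
  exact steiner_params_of_eq ht htk
    (fun j hj => hB.choose_dvd_choose hblocks htk.le (by omega) hj) heq
end

section
/- Let D be a non-trivial Steiner t-design with t = 4 + i, where i ∈ {0,1}. Then k ≤ ⌊√(v - (11/4 + i)) + 5/2 + i⌋, where ⌊x⌋ denotes the greatest integer at most x. -/
/-!
Passing to the derived design at a point lowers `t` and `k` by one and `v` by one, so it suffices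
to treat Steiner 2-designs. There, for a point `p` outside a block `b₀`, the blocks through `p`
partition the remaining `v - 1` points into parts of size `k - 1`, and each point of `b₀` lies on
its own block through `p`; hence `v - 1 ≥ k (k - 1)`. Unwinding the induction gives
`v ≥ (k - t + 2)(k - t + 1) + t - 1`, i.e. `v - (t - 5/4) ≥ (k - t + 3/2)²`.
-/

open Finset

section

variable {X : Type*} [DecidableEq X]

/-- The points form a `Finset` of an ambient type, so that derived designs live in the same type. -/
structure IsSteinerDesign (S : Finset X) (B : Finset (Finset X)) (t k : ℕ) : Prop where
  subset_of_mem : ∀ b ∈ B, b ⊆ S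
  card_of_mem : ∀ b ∈ B, #b = k
  card_filter_superset : ∀ T ⊆ S, #T = t → #{b ∈ B | T ⊆ b} = 1

namespace IsSteinerDesign

variable {S : Finset X} {B : Finset (Finset X)} {t k : ℕ}

theorem exists_superset (hD : IsSteinerDesign S B t k) {T : Finset X} (hTS : T ⊆ S)
    (hT : #T = t) : ∃ b ∈ B, T ⊆ b := by
  obtain ⟨b, hb⟩ := card_pos.mp (hD.card_filter_superset T hTS hT ▸ one_pos)
  exact ⟨b, mem_filter.mp hb⟩

theorem eq_of_superset (hD : IsSteinerDesign S B t k) {T : Finset X} (hTS : T ⊆ S)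
    (hT : #T = t) {b b' : Finset X} (hb : b ∈ B) (hb' : b' ∈ B) (hTb : T ⊆ b)
    (hTb' : T ⊆ b') : b = b' :=
  card_le_one.mp (hD.card_filter_superset T hTS hT).le b (mem_filter.mpr ⟨hb, hTb⟩) b'
    (mem_filter.mpr ⟨hb', hTb'⟩)

theorem exists_mem_mem (hD : IsSteinerDesign S B 2 k) {y z : X} (hy : y ∈ S) (hz : z ∈ S)
    (hyz : y ≠ z) : ∃ b ∈ B, y ∈ b ∧ z ∈ b := by
  obtain ⟨b, hb, hyzb⟩ := hD.exists_superset (insert_subset hy (singleton_subset_iff.mpr hz))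
    (card_pair hyz)
  obtain ⟨hyb, hzb⟩ := insert_subset_iff.mp hyzb
  exact ⟨b, hb, hyb, singleton_subset_iff.mp hzb⟩

theorem eq_of_mem_of_mem (hD : IsSteinerDesign S B 2 k) {y z : X} (hyz : y ≠ z)
    {b b' : Finset X} (hb : b ∈ B) (hb' : b' ∈ B) (hyb : y ∈ b) (hzb : z ∈ b) (hyb' : y ∈ b')
    (hzb' : z ∈ b') : b = b' :=
  hD.eq_of_superset (insert_subset (hD.subset_of_mem b hb hyb)
    (singleton_subset_iff.mpr (hD.subset_of_mem b hb hzb))) (card_pair hyz) hb hb'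
    (insert_subset hyb (singleton_subset_iff.mpr hzb))
    (insert_subset hyb' (singleton_subset_iff.mpr hzb'))

theorem card_erase_eq_card_filter_mem_mul (hD : IsSteinerDesign S B 2 k) {p : X} (hp : p ∈ S) :
    #(S.erase p) = #{b ∈ B | p ∈ b} * (k - 1) := by
  have hAbove : ∀ y ∈ S.erase p, #({b ∈ B | p ∈ b}.bipartiteAbove (· ∈ ·) y) = 1 := by
    intro y hy
    obtain ⟨hyp, hyS⟩ := mem_erase.mp hy
    obtain ⟨b, hb, hpb, hyb⟩ := hD.exists_mem_mem hp hyS (Ne.symm hyp)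
    refine card_eq_one.mpr ⟨b, eq_singleton_iff_unique_mem.mpr ⟨?_, fun b' hb' => ?_⟩⟩
    · simp [mem_bipartiteAbove, hb, hpb, hyb]
    · simp only [mem_bipartiteAbove, mem_filter] at hb'
      exact hD.eq_of_mem_of_mem (Ne.symm hyp) hb'.1.1 hb hb'.1.2 hb'.2 hpb hyb
  have hBelow : ∀ b ∈ {b ∈ B | p ∈ b}, #((S.erase p).bipartiteBelow (· ∈ ·) b) = k - 1 := by
    intro b hb
    obtain ⟨hb, hpb⟩ := mem_filter.mp hb
    have : (S.erase p).bipartiteBelow (· ∈ ·) b = b.erase p := by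
      ext y
      simp only [mem_bipartiteBelow, mem_erase]
      exact ⟨fun h => ⟨h.1.1, h.2⟩, fun h => ⟨⟨h.1, hD.subset_of_mem b hb h.2⟩, h.2⟩⟩
    rw [this, card_erase_of_mem hpb, hD.card_of_mem b hb]
  simpa using card_mul_eq_card_mul (· ∈ ·) hAbove hBelow

theorem le_card_filter_mem (hD : IsSteinerDesign S B 2 k) {p : X} {b₀ : Finset X} (hb₀ : b₀ ∈ B)
    (hp : p ∈ S) (hpb₀ : p ∉ b₀) : k ≤ #{b ∈ B | p ∈ b} := by
  rw [← hD.card_of_mem b₀ hb₀]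
  refine card_le_card_of_forall_subsingleton (· ∈ ·) (fun y hy => ?_) (fun b hb => ?_)
  · obtain ⟨b, hb, hpb, hyb⟩ :=
      hD.exists_mem_mem hp (hD.subset_of_mem b₀ hb₀ hy) (by rintro rfl; exact hpb₀ hy)
    exact ⟨b, mem_filter.mpr ⟨hb, hpb⟩, hyb⟩
  · rintro y ⟨hy, hyb⟩ z ⟨hz, hzb⟩
    by_contra hyz
    obtain ⟨hb, hpb⟩ := mem_filter.mp hb
    exact hpb₀ (hD.eq_of_mem_of_mem hyz hb₀ hb hy hz hyb hzb ▸ hpb)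

theorem mul_pred_add_one_le_card (hD : IsSteinerDesign S B 2 k) (h2k : 2 ≤ k) (hkS : k < #S) :
    k * (k - 1) + 1 ≤ #S := by
  obtain ⟨T, hTS, hT⟩ := exists_subset_card_eq (show 2 ≤ #S by omega)
  obtain ⟨b₀, hb₀, -⟩ := hD.exists_superset hTS hT
  obtain ⟨p, hp⟩ : (S \ b₀).Nonempty := by
    rw [← card_pos, card_sdiff_of_subset (hD.subset_of_mem b₀ hb₀), hD.card_of_mem b₀ hb₀]
    omega
  obtain ⟨hpS, hpb₀⟩ := mem_sdiff.mp hp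
  have hrep := hD.card_erase_eq_card_filter_mem_mul hpS
  rw [card_erase_of_mem hpS] at hrep
  have := Nat.mul_le_mul_right (k - 1) (hD.le_card_filter_mem hb₀ hpS hpb₀)
  omega

theorem derived (hD : IsSteinerDesign S B (t + 1) k) {x : X} (hx : x ∈ S) :
    IsSteinerDesign (S.erase x) ({b ∈ B | x ∈ b}.image (·.erase x)) t (k - 1) where
  subset_of_mem := by
    simp only [mem_image, mem_filter]
    rintro _ ⟨b, ⟨hb, -⟩, rfl⟩
    exact erase_subset_erase x (hD.subset_of_mem b hb)
  card_of_mem := by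
    simp only [mem_image, mem_filter]
    rintro _ ⟨b, ⟨hb, hxb⟩, rfl⟩
    rw [card_erase_of_mem hxb, hD.card_of_mem b hb]
  card_filter_superset T hTS hT := by
    have hxT : x ∉ T := fun h => (mem_erase.mp (hTS h)).1 rfl
    have : {c ∈ {b ∈ B | x ∈ b}.image (·.erase x) | T ⊆ c} =
        {b ∈ B | insert x T ⊆ b}.image (·.erase x) := by
      ext c
      simp only [mem_filter, mem_image, insert_subset_iff]
      constructor
      · rintro ⟨⟨b, ⟨hb, hxb⟩, rfl⟩, hTb⟩
        exact ⟨b, ⟨hb, hxb, hTb.trans (erase_subset x b)⟩, rfl⟩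
      · rintro ⟨b, ⟨hb, hxb, hTb⟩, rfl⟩
        exact ⟨⟨b, ⟨hb, hxb⟩, rfl⟩, subset_erase.mpr ⟨hTb, hxT⟩⟩
    rw [this, card_image_of_injOn, hD.card_filter_superset _
      (insert_subset hx (hTS.trans (erase_subset x S))) (by rw [card_insert_of_notMem hxT, hT])]
    exact (erase_injOn' x).mono fun b hb => (insert_subset_iff.mp (mem_filter.mp hb).2).1

theorem mul_add_le_card_add_one (hD : IsSteinerDesign S B t k) (ht : 2 ≤ t) (htk : t < k)
    (hkS : k < #S) :
    (k - t + 2) * (k - t + 1) + t ≤ #S + 1 := by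
  induction t, ht using Nat.le_induction generalizing S B k with
  | base =>
    have := hD.mul_pred_add_one_le_card (by omega) hkS
    rw [show k - 2 + 2 = k by omega, show k - 2 + 1 = k - 1 by omega]
    omega
  | succ t ht ih =>
    obtain ⟨x, hx⟩ := card_pos.mp (show 0 < #S by omega)
    have := ih (hD.derived hx) (by omega) (by rw [card_erase_of_mem hx]; omega)
    rw [card_erase_of_mem hx, show k - 1 - t = k - (t + 1) by omega] at this
    omega

theorem le_sqrt_card_sub_add (hD : IsSteinerDesign S B t k) (ht : 2 ≤ t) (htk : t < k)
    (hkS : k < #S) : (k : ℝ) ≤ √(#S - (t - 5 / 4)) + (t - 3 / 2) := by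
  have hbound := hD.mul_add_le_card_add_one ht htk hkS
  obtain ⟨m, rfl⟩ := Nat.exists_eq_add_of_lt htk
  rw [show t + m + 1 - t = m + 1 by omega] at hbound
  have hbound' : ((m : ℝ) + 3) * (m + 2) + t ≤ #S + 1 := by exact_mod_cast hbound
  have hsqrt : (m : ℝ) + 5 / 2 ≤ √(#S - (t - 5 / 4)) :=
    (Real.le_sqrt (by positivity) (by nlinarith)).mpr (by nlinarith)
  push_cast
  linarith

end IsSteinerDesign

end

theorem stmt_7_general {X : Type*} [Fintype X] [DecidableEq X]
    (v k t i : ℕ) (hti : t = 4 + i) (htk : t < k) (hkv : k < v)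
    (B : Finset (Finset X))
    (hX : Fintype.card X = v)
    (hblocks : ∀ b ∈ B, b.card = k)
    (hdesign : ∀ T : Finset X, T.card = t → (B.filter (fun b => T ⊆ b)).card = 1) :
    (k : ℤ) ≤ ⌊Real.sqrt ((v : ℝ) - (11 / 4 + (i : ℝ))) + 5 / 2 + (i : ℝ)⌋ := by
  have hD : IsSteinerDesign (univ : Finset X) B t k :=
    ⟨fun b _ => subset_univ b, hblocks, fun T _ hT => hdesign T hT⟩
  have hbound := hD.le_sqrt_card_sub_add (by omega) htk (by rwa [card_univ, hX])
  rw [card_univ, hX, hti] at hbound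
  rw [Int.le_floor]
  push_cast at hbound ⊢
  rw [show (4 : ℝ) + i - 5 / 4 = 11 / 4 + i by ring] at hbound
  linarith

/-- Let `D` be a non-trivial Steiner `t`-design with `t = 4 + i`, `i ∈ {0,1}`.
Then `k ≤ ⌊√(v - (11/4 + i)) + 5/2 + i⌋`. -/
theorem stmt_7 {X : Type*} [Fintype X] [DecidableEq X]
    (v k t i : ℕ) (hi : i = 0 ∨ i = 1) (hti : t = 4 + i) (htk : t < k) (hkv : k < v)
    (B : Finset (Finset X))
    (hX : Fintype.card X = v)
    (hblocks : ∀ b ∈ B, b.card = k)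
    (hdesign : ∀ T : Finset X, T.card = t → (B.filter (fun b => T ⊆ b)).card = 1) :
    (k : ℤ) ≤ ⌊Real.sqrt ((v : ℝ) - (11 / 4 + (i : ℝ))) + 5 / 2 + (i : ℝ)⌋ :=
  stmt_7_general v k t i hti htk hkv B hX hblocks hdesign
end

section
/- Let d ≥ 3 and let AGL(d,2) be the group of affine transformations x ↦ g(x) + u of the vector space V = (F_2)^d, where g ∈ GL(d,2) and u ∈ V, acting on the v = 2^d points of V. There is no non-trivial Steiner 4-design D on the point set V admitting AGL(d,2) as a block-transitive group of automorphisms. -/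
/-!
Let `W` be a plane through `0` in `V = 𝔽₂ᵈ`. Its four points lie in a unique block `b`, so every
linear automorphism fixing `W` pointwise maps `b` to a block through `W`, i.e. to `b` itself.
Over `𝔽₂` these automorphisms are transitive on `V \ W`: for `p, q ∉ W` pick a linear form `f`
vanishing on `W` with `f p = f q = 1`; the transvection `x ↦ x + f x • (p + q)` fixes `W` and sends
`p` to `q`. Since `b` has `k > 4` points it meets `V \ W`, hence `b = V`, contradicting `k < 2 ^ d`.
-/

open Module Finset

lemma ZMod.eq_one_iff_ne_zero {a : ZMod 2} : a = 1 ↔ a ≠ 0 := by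
  revert a; decide

section CharTwo

variable {V : Type*} [AddCommGroup V] [Module (ZMod 2) V] {W : Submodule (ZMod 2) V} {p q : V}

lemma exists_dual_le_ker_apply_eq_one (hp : p ∉ W) :
    ∃ f : Dual (ZMod 2) V, W ≤ LinearMap.ker f ∧ f p = 1 := by
  obtain ⟨f, hfp, hfW⟩ := W.exists_dual_map_eq_bot_of_notMem hp inferInstance
  exact ⟨f, LinearMap.le_ker_iff_map.mpr hfW, ZMod.eq_one_iff_ne_zero.mpr hfp⟩

lemma exists_dual_le_ker_apply_eq_one_apply_eq_one (hp : p ∉ W) (hq : q ∉ W) :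
    ∃ f : Dual (ZMod 2) V, W ≤ LinearMap.ker f ∧ f p = 1 ∧ f q = 1 := by
  obtain ⟨f, hfW, hfp⟩ := exists_dual_le_ker_apply_eq_one hp
  obtain ⟨f', hf'W, hf'q⟩ := exists_dual_le_ker_apply_eq_one hq
  by_cases hfq : f q = 1
  · exact ⟨f, hfW, hfp, hfq⟩
  by_cases hf'p : f' p = 1
  · exact ⟨f', hf'W, hf'p, hf'q⟩
  rw [ZMod.eq_one_iff_ne_zero, not_not] at hfq hf'p
  refine ⟨f + f', fun w hw => ?_, ?_, ?_⟩
  · simp [LinearMap.mem_ker.mp (hfW hw), LinearMap.mem_ker.mp (hf'W hw)]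
  · rw [LinearMap.add_apply, hfp, hf'p, add_zero]
  · rw [LinearMap.add_apply, hf'q, hfq, zero_add]

lemma exists_linearEquiv_fixing_apply_eq (hp : p ∉ W) (hq : q ∉ W) :
    ∃ g : V ≃ₗ[ZMod 2] V, (∀ w ∈ W, g w = w) ∧ g p = q := by
  obtain ⟨f, hfW, hfp, hfq⟩ := exists_dual_le_ker_apply_eq_one_apply_eq_one hp hq
  have hpq : f (p + q) = 0 := by rw [map_add, hfp, hfq, ZModModule.add_self]
  refine ⟨LinearEquiv.transvection hpq, fun w hw => ?_, ?_⟩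
  · rw [LinearEquiv.transvection.apply, LinearMap.mem_ker.mp (hfW hw), zero_smul, add_zero]
  · rw [LinearEquiv.transvection.apply, hfp, one_smul, ← add_assoc, ZModModule.add_self, zero_add]

lemma Set.eq_univ_of_forall_linearEquiv_mapsTo {b : Set V} (hWb : (W : Set V) ⊆ b)
    (hb : ∀ g : V ≃ₗ[ZMod 2] V, (∀ w ∈ W, g w = w) → Set.MapsTo g b b)
    (hpb : p ∈ b) (hpW : p ∉ W) : b = Set.univ := by
  refine Set.eq_univ_of_forall fun q => ?_
  by_cases hqW : q ∈ W
  · exact hWb hqW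
  obtain ⟨g, hgW, hgp⟩ := exists_linearEquiv_fixing_apply_eq hpW hqW
  exact hgp ▸ hb g hgW hpb

end CharTwo

lemma exists_submodule_natCard_eq_pow {K V : Type*} [Field K] [AddCommGroup V] [Module K V]
    [FiniteDimensional K V] {n : ℕ} (hn : n ≤ finrank K V) :
    ∃ W : Submodule K V, Nat.card W = Nat.card K ^ n := by
  obtain ⟨f, hf⟩ := exists_linearIndependent_of_le_finrank hn
  refine ⟨Submodule.span K (Set.range f), ?_⟩
  rw [Module.natCard_eq_pow_finrank (K := K), finrank_span_eq_card hf, Fintype.card_fin]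

lemma Finset.image_eq_self_of_card_filter_superset_eq_one {α : Type*} [DecidableEq α]
    {B : Finset (Finset α)} {T b : Finset α} [DecidablePred (T ⊆ ·)]
    (hT : (B.filter (T ⊆ ·)).card = 1) (hb : b ∈ B) (hTb : T ⊆ b) {g : α → α}
    (hgB : b.image g ∈ B) (hgT : ∀ t ∈ T, g t = t) : b.image g = b :=
  card_le_one.mp hT.le _ (mem_filter.mpr ⟨hgB, fun t ht => mem_image.mpr ⟨t, hTb ht, hgT t ht⟩⟩)
    _ (mem_filter.mpr ⟨hb, hTb⟩)

theorem stmt_13_general (d : ℕ) (hd : 3 ≤ d)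
    (k : ℕ) (htk : 4 < k) (hkv : k < 2 ^ d)
    (B : Finset (Finset (Fin d → ZMod 2)))
    (hblocks : ∀ b ∈ B, b.card = k)
    (hdesign : ∀ T : Finset (Fin d → ZMod 2), T.card = 4 →
      (B.filter (fun b => T ⊆ b)).card = 1)
    (hAut : ∀ (g : (Fin d → ZMod 2) ≃ₗ[ZMod 2] (Fin d → ZMod 2)) (u : Fin d → ZMod 2),
      ∀ b ∈ B, b.image (fun x => g x + u) ∈ B) :
    False := by
  classical
  obtain ⟨W, hW⟩ := exists_submodule_natCard_eq_pow (K := ZMod 2) (V := Fin d → ZMod 2) (n := 2)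
    (by rw [finrank_fin_fun]; omega)
  set T := (W : Set (Fin d → ZMod 2)).toFinset
  have hT : T.card = 4 := by
    rw [Set.toFinset_card, ← Nat.card_eq_fintype_card]
    simpa using hW
  obtain ⟨b, hbB, hTb⟩ : ∃ b ∈ B, T ⊆ b :=
    filter_nonempty_iff.mp (card_pos.mp (by rw [hdesign T hT]; exact one_pos))
  have hbk := hblocks b hbB
  have hstab : ∀ g : (Fin d → ZMod 2) ≃ₗ[ZMod 2] (Fin d → ZMod 2), (∀ w ∈ W, g w = w) →
      Set.MapsTo g b b := by
    intro g hg x hx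
    have hgb : b.image g = b :=
      image_eq_self_of_card_filter_superset_eq_one (hdesign T hT) hbB hTb
        (by simpa using hAut g 0 b hbB) (by simpa [T] using hg)
    exact hgb ▸ mem_image_of_mem g hx
  obtain ⟨p, hpb, hpW⟩ : ∃ p ∈ b, p ∉ W := by
    by_contra! h
    have := card_le_card (fun x hx => by simpa [T] using h x hx : b ⊆ T)
    omega
  have hb : (b : Set (Fin d → ZMod 2)) = Set.univ :=
    Set.eq_univ_of_forall_linearEquiv_mapsTo (by simpa [T] using hTb) hstab hpb hpW
  rw [coe_eq_univ.mp hb, card_univ, Fintype.card_fun, ZMod.card, Fintype.card_fin] at hbk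
  omega

/-- Let `d ≥ 3` and let `AGL(d,2)` act as the affine maps `x ↦ g x + u`
(`g ∈ GL(d,2)`, `u ∈ V`) on the `v = 2^d` points of `V = (F₂)^d`. There is no non-trivial
Steiner 4-design on `V` admitting `AGL(d,2)` as a block-transitive group of automorphisms. -/
theorem stmt_13 (d : ℕ) (hd : 3 ≤ d)
    (k : ℕ) (htk : 4 < k) (hkv : k < 2 ^ d)
    (B : Finset (Finset (Fin d → ZMod 2)))
    (hblocks : ∀ b ∈ B, b.card = k)
    (hdesign : ∀ T : Finset (Fin d → ZMod 2), T.card = 4 →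
      (B.filter (fun b => T ⊆ b)).card = 1)
    (hAut : ∀ (g : (Fin d → ZMod 2) ≃ₗ[ZMod 2] (Fin d → ZMod 2)) (u : Fin d → ZMod 2),
      ∀ b ∈ B, b.image (fun x => g x + u) ∈ B)
    (hBT : ∀ b₁ ∈ B, ∀ b₂ ∈ B,
      ∃ (g : (Fin d → ZMod 2) ≃ₗ[ZMod 2] (Fin d → ZMod 2)) (u : Fin d → ZMod 2),
        b₁.image (fun x => g x + u) = b₂) :
    False :=
  stmt_13_general d hd k htk hkv B hblocks hdesign hAut
end
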